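/- Let m ∈ ℕ, γ ∈ (0,1], α ∈ (0,1]. Let ≽ be a binary relation on 𝒟₁(ℝ^m) and u : 𝒟₁(ℝ^m) → ℝ such that: (i) for all ν, ν' ∈ 𝒟₁(ℝ^m), ν ≽ ν' if and only if u(ν) ≥ u(ν'); and (ii) the map x ↦ u(δ_x) is Borel measurable, ν-integrable, and u(ν) = ∫ u(δ_x) dν(x) for all ν ∈ 𝒟₁(ℝ^m). Then the following are equivalent: (a) for all ν, ν' ∈ 𝒟₁(ℝ^m), the measures (1/(1+α))·S_γ ν + (α/(1+α))·ν' and (1/(1+α))·S_γ ν' + (α/(1+α))·ν are ≽-equivalent (each is ≽ the other); (b) for all c ∈ ℝ^m, α·(u(δ_c) − u(δ_0)) = u(δ_{γ·c}) − u(δ_0). -/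

import Mathlib

/-! With `f x = u(δ_x)`, linearity of `u` gives
`u (discountMix γ α ν ν') = (∫ f (γ • x) dν + α · u ν') / (1 + α)`.
Indifference between the two mixtures of `δ_c` and `δ_0` is then exactly (b) at `c`. Conversely,
(b) says `f (γ • x) = α (f x - f 0) + f 0`, so `∫ f (γ • x) dν = α (u ν - f 0) + f 0`, which makes
the utility of the mixture symmetric in `ν` and `ν'`. -/

open MeasureTheory

noncomputable section

abbrev Rm (m : ℕ) := Fin m → ℝ

/-- The ℓ¹ norm on ℝ^m. -/
def norm1 {m : ℕ} (x : Rm m) : ℝ := ∑ i, |x i|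

/-- Finite first moment with respect to the ℓ¹ norm. -/
def FiniteFirstMoment {m : ℕ} (ν : Measure (Rm m)) : Prop :=
  Integrable (fun x => norm1 x) ν

/-- Pushforward of `ν` under scaling by `γ`. -/
def Sgamma {m : ℕ} (γ : ℝ) (ν : Measure (Rm m)) : Measure (Rm m) :=
  ν.map (fun x => γ • x)

/-- The mixture `(1/(1+α))·S_γ ν + (α/(1+α))·ν'` (setwise convex combination). -/
def discountMix {m : ℕ} (γ α : ℝ) (ν ν' : Measure (Rm m)) : Measure (Rm m) :=
  (ENNReal.ofReal (1 / (1 + α))) • Sgamma γ ν + (ENNReal.ofReal (α / (1 + α))) • ν'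

variable {m : ℕ}

lemma norm1_smul (c : ℝ) (x : Rm m) : norm1 (c • x) = |c| * norm1 x := by
  simp only [norm1, Pi.smul_apply, smul_eq_mul, abs_mul, Finset.mul_sum]

lemma continuous_norm1 : Continuous (norm1 (m := m)) :=
  continuous_finsetSum _ fun i _ => (continuous_apply i).abs

lemma finiteFirstMoment_dirac (c : Rm m) : FiniteFirstMoment (Measure.dirac c) :=
  integrable_dirac enorm_lt_top

lemma integrable_sgamma_iff {γ : ℝ} {ν : Measure (Rm m)} {f : Rm m → ℝ} (hf : Measurable f) :
    Integrable f (Sgamma γ ν) ↔ Integrable (fun x => f (γ • x)) ν :=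
  integrable_map_measure hf.aestronglyMeasurable (measurable_const_smul γ).aemeasurable

lemma integral_sgamma {γ : ℝ} {ν : Measure (Rm m)} {f : Rm m → ℝ} (hf : Measurable f) :
    ∫ x, f x ∂(Sgamma γ ν) = ∫ x, f (γ • x) ∂ν :=
  integral_map (measurable_const_smul γ).aemeasurable hf.aestronglyMeasurable

lemma FiniteFirstMoment.sgamma {ν : Measure (Rm m)} (hν : FiniteFirstMoment ν) (γ : ℝ) :
    FiniteFirstMoment (Sgamma γ ν) := by
  rw [FiniteFirstMoment, integrable_sgamma_iff continuous_norm1.measurable]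
  simpa only [norm1_smul] using hν.const_mul |γ|

lemma FiniteFirstMoment.discountMix {ν ν' : Measure (Rm m)} (hν : FiniteFirstMoment ν)
    (hν' : FiniteFirstMoment ν') (γ α : ℝ) : FiniteFirstMoment (discountMix γ α ν ν') :=
  ((hν.sgamma γ).smul_measure ENNReal.ofReal_ne_top).add_measure
    (hν'.smul_measure ENNReal.ofReal_ne_top)

lemma isProbabilityMeasure_discountMix {α : ℝ} (hα : 0 ≤ α) (γ : ℝ) (ν ν' : Measure (Rm m))
    [IsProbabilityMeasure ν] [IsProbabilityMeasure ν'] :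
    IsProbabilityMeasure (discountMix γ α ν ν') := by
  have : IsProbabilityMeasure (Sgamma γ ν) :=
    Measure.isProbabilityMeasure_map (measurable_const_smul γ).aemeasurable
  constructor
  simp only [discountMix, Measure.add_apply, Measure.smul_apply, measure_univ,
    smul_eq_mul, mul_one]
  rw [← ENNReal.ofReal_add (by positivity) (by positivity), ← add_div,
    div_self (by positivity), ENNReal.ofReal_one]

lemma integral_discountMix {γ α : ℝ} (hα : 0 ≤ α) {ν ν' : Measure (Rm m)} {f : Rm m → ℝ}
    (hf : Measurable f) (hν : Integrable (fun x => f (γ • x)) ν) (hν' : Integrable f ν') :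
    ∫ x, f x ∂(discountMix γ α ν ν') = (∫ x, f (γ • x) ∂ν + α * ∫ x, f x ∂ν') / (1 + α) := by
  rw [discountMix, integral_add_measure
      (((integrable_sgamma_iff hf).2 hν).smul_measure ENNReal.ofReal_ne_top)
      (hν'.smul_measure ENNReal.ofReal_ne_top),
    integral_smul_measure, integral_smul_measure, integral_sgamma hf,
    ENNReal.toReal_ofReal (by positivity), ENNReal.toReal_ofReal (by positivity)]
  simp only [smul_eq_mul]
  ring

lemma integral_comp_smul_of_homogeneous {γ α : ℝ} {f : Rm m → ℝ}
    (hhom : ∀ c, α * (f c - f 0) = f (γ • c) - f 0) {ν : Measure (Rm m)}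
    [IsProbabilityMeasure ν] (hf : Integrable f ν) :
    Integrable (fun x => f (γ • x)) ν ∧
      ∫ x, f (γ • x) ∂ν = α * (∫ x, f x ∂ν - f 0) + f 0 := by
  have hcomp : (fun x => f (γ • x)) = fun x => α * (f x - f 0) + f 0 := by
    funext x
    linarith [hhom x]
  have hint : Integrable (fun x => α * (f x - f 0)) ν :=
    (hf.sub (integrable_const _)).const_mul α
  rw [hcomp, integral_add hint (integrable_const _), integral_const_mul,
    integral_sub hf (integrable_const _)]
  simp [hint]

lemma utility_discountMix {u : Measure (Rm m) → ℝ} {γ α : ℝ} (hα : 0 ≤ α)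
    (humeas : Measurable fun x : Rm m => u (Measure.dirac x))
    (huint : ∀ ν : Measure (Rm m), IsProbabilityMeasure ν → FiniteFirstMoment ν →
      Integrable (fun x => u (Measure.dirac x)) ν)
    (hulin : ∀ ν : Measure (Rm m), IsProbabilityMeasure ν → FiniteFirstMoment ν →
      u ν = ∫ x, u (Measure.dirac x) ∂ν)
    {ν ν' : Measure (Rm m)} [IsProbabilityMeasure ν] [IsProbabilityMeasure ν']
    (hν : FiniteFirstMoment ν) (hν' : FiniteFirstMoment ν')
    (hint : Integrable (fun x => u (Measure.dirac (γ • x))) ν) :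
    u (discountMix γ α ν ν') = (∫ x, u (Measure.dirac (γ • x)) ∂ν + α * u ν') / (1 + α) := by
  rw [hulin _ (isProbabilityMeasure_discountMix hα γ ν ν') (hν.discountMix hν' γ α),
    integral_discountMix hα humeas hint (huint ν' ‹_› hν'), hulin ν' ‹_› hν']

lemma pref_discountMix_and_pref_iff {pref : Measure (Rm m) → Measure (Rm m) → Prop}
    {u : Measure (Rm m) → ℝ} {γ α : ℝ} (hα : 0 ≤ α)
    (hequiv : ∀ ν ν' : Measure (Rm m),
      IsProbabilityMeasure ν → FiniteFirstMoment ν →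
      IsProbabilityMeasure ν' → FiniteFirstMoment ν' →
      (pref ν ν' ↔ u ν' ≤ u ν))
    {ν ν' : Measure (Rm m)} [IsProbabilityMeasure ν] [IsProbabilityMeasure ν']
    (hν : FiniteFirstMoment ν) (hν' : FiniteFirstMoment ν') :
    pref (discountMix γ α ν ν') (discountMix γ α ν' ν) ∧
        pref (discountMix γ α ν' ν) (discountMix γ α ν ν') ↔
      u (discountMix γ α ν ν') = u (discountMix γ α ν' ν) := by
  have h₁ := isProbabilityMeasure_discountMix hα γ ν ν'
  have h₂ := isProbabilityMeasure_discountMix hα γ ν' ν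
  have hν₁ := hν.discountMix hν' γ α
  have hν₂ := hν'.discountMix hν γ α
  rw [hequiv _ _ h₁ hν₁ h₂ hν₂, hequiv _ _ h₂ hν₂ h₁ hν₁]
  exact ⟨fun h => le_antisymm h.2 h.1, fun h => ⟨h.ge, h.le⟩⟩

theorem discount_indifference_iff_positively_homogeneous
    (m : ℕ) (γ α : ℝ)
    (hα : α ∈ Set.Ioc (0 : ℝ) 1)
    (pref : Measure (Rm m) → Measure (Rm m) → Prop)
    (u : Measure (Rm m) → ℝ)
    (hequiv : ∀ ν ν' : Measure (Rm m),
      IsProbabilityMeasure ν → FiniteFirstMoment ν →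
      IsProbabilityMeasure ν' → FiniteFirstMoment ν' →
      (pref ν ν' ↔ u ν' ≤ u ν))
    (humeas : Measurable (fun x : Rm m => u (Measure.dirac x)))
    (huint : ∀ ν : Measure (Rm m), IsProbabilityMeasure ν → FiniteFirstMoment ν →
      Integrable (fun x => u (Measure.dirac x)) ν)
    (hulin : ∀ ν : Measure (Rm m), IsProbabilityMeasure ν → FiniteFirstMoment ν →
      u ν = ∫ x, u (Measure.dirac x) ∂ν) :
    ((∀ ν ν' : Measure (Rm m),
        IsProbabilityMeasure ν → FiniteFirstMoment ν →
        IsProbabilityMeasure ν' → FiniteFirstMoment ν' →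
        pref (discountMix γ α ν ν') (discountMix γ α ν' ν) ∧
        pref (discountMix γ α ν' ν) (discountMix γ α ν ν'))
      ↔
      (∀ c : Rm m,
        α * (u (Measure.dirac c) - u (Measure.dirac (0 : Rm m))) =
          u (Measure.dirac (γ • c)) - u (Measure.dirac (0 : Rm m)))) := by
  have hα0 : 0 ≤ α := hα.1.le
  constructor
  · intro h c
    have hc := finiteFirstMoment_dirac c
    have h0 := finiteFirstMoment_dirac (0 : Rm m)
    have heq := (pref_discountMix_and_pref_iff hα0 hequiv hc h0).1
      (h _ _ inferInstance hc inferInstance h0)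
    rw [utility_discountMix hα0 humeas huint hulin hc h0 (integrable_dirac enorm_lt_top),
      utility_discountMix hα0 humeas huint hulin h0 hc (integrable_dirac enorm_lt_top),
      integral_dirac, integral_dirac, smul_zero] at heq
    field_simp at heq
    linarith
  · intro h ν ν' _ hν _ hν'
    obtain ⟨hint, hintegral⟩ := integral_comp_smul_of_homogeneous h (huint ν ‹_› hν)
    obtain ⟨hint', hintegral'⟩ := integral_comp_smul_of_homogeneous h (huint ν' ‹_› hν')
    rw [pref_discountMix_and_pref_iff hα0 hequiv hν hν',
      utility_discountMix hα0 humeas huint hulin hν hν' hint,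
      utility_discountMix hα0 humeas huint hulin hν' hν hint', hintegral, hintegral',
      ← hulin ν ‹_› hν, ← hulin ν' ‹_› hν']
    ring
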